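/- arXiv:1501.01138 — 5 statements merged into one kernel-verified Lean document; each statement's English description precedes it below -/
import Mathlib

section
/- Let X ⊆ D^k be a finite symmetric set (closed under permutation of coordinates) and f : X → ℂ a symmetric function. Then the sum of f over the pairwise-distinct-coordinate subset X̄ equals ∑_{[τ] ∈ C_k} sign(τ) · C(τ) · F_τ, where the sum ranges over conjugacy classes C_k of S_k, C(τ) is the size of the conjugacy class of τ, and F_τ = ∑_{x ∈ X_τ} f(x) for a fixed representative τ. -/
/-!
Since `∑_{σ ∈ Stab(x)} sign σ` is `1` when `x` is injective and `0` otherwise (a repeated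
value puts a transposition into the stabilizer, which pairs off the permutations of opposite
signs), the sum over `X̄` equals `∑_σ sign σ · F_σ`. For symmetric `X` and `f`, reindexing
by `x ↦ x ∘ π` shows `F_{π τ π⁻¹} = F_τ`, so the summand is a class function and the sum
collapses to one term per conjugacy class, weighted by its size.
-/

open Finset Equiv

open scoped Classical

-- The decidability of `∀ i, x (σ i) = x i` is left abstract so that these lemmas match
-- `Nat.decidableForallFin`, the instance the statement elaborates to on `Fin k`.
lemma sum_filter_conj_eq_of_symmetric {α D : Type*}
    [∀ σ : Perm α, DecidablePred fun x : α → D => ∀ i, x (σ i) = x i]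
    (X : Finset (α → D)) (f : (α → D) → ℂ)
    (hX : ∀ (π : Perm α) (x : α → D), x ∈ X → x ∘ π ∈ X)
    (hf : ∀ (π : Perm α) (x : α → D), f (x ∘ π) = f x) (τ π : Perm α) :
    ∑ x ∈ X.filter (fun x => ∀ i, x ((π * τ * π⁻¹) i) = x i), f x =
      ∑ x ∈ X.filter (fun x => ∀ i, x (τ i) = x i), f x := by
  refine sum_nbij' (· ∘ π) (· ∘ ⇑π⁻¹) (fun x hx => ?_) (fun y hy => ?_)
    (fun x _ => by ext; simp) (fun y _ => by ext; simp) (fun x _ => (hf π x).symm)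
  · simp only [mem_filter] at hx ⊢
    exact ⟨hX π x hx.1, fun i => by simpa using hx.2 (π i)⟩
  · simp only [mem_filter] at hy ⊢
    exact ⟨hX π⁻¹ y hy.1, fun i => by simpa using hy.2 (π⁻¹ i)⟩

lemma sum_sign_fixing_eq_ite_injective {α D : Type*} [Fintype α] [DecidableEq α]
    [∀ σ : Perm α, DecidablePred fun x : α → D => ∀ i, x (σ i) = x i] (x : α → D) :
    ∑ σ ∈ univ.filter (fun σ : Perm α => ∀ i, x (σ i) = x i), ((Perm.sign σ : ℤ) : ℂ) =
      if Function.Injective x then 1 else 0 := by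
  set S := univ.filter (fun σ : Perm α => ∀ i, x (σ i) = x i)
  split_ifs with hx
  · have hS : S = {1} := by
      ext σ
      simp only [S, mem_filter, mem_univ, true_and, mem_singleton]
      exact ⟨fun h => Perm.ext fun i => hx (h i), fun h i => by rw [h, Perm.one_apply]⟩
    simp [hS]
  · obtain ⟨i, j, hxij, hij⟩ := Function.not_injective_iff.mp hx
    have hswap := apply_swap_eq_self hxij
    have hmem : ∀ σ, σ ∈ S ↔ Equiv.mulRight (swap i j) σ ∈ S := by
      intro σ
      simp only [S, mem_filter, mem_univ, true_and, coe_mulRight, Perm.mul_apply]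
      constructor
      · intro h m; rw [h, hswap]
      · intro h m; simpa [hswap] using h (swap i j m)
    have hneg : ∑ σ ∈ S, ((Perm.sign σ : ℤ) : ℂ) = -∑ σ ∈ S, ((Perm.sign σ : ℤ) : ℂ) := by
      rw [← sum_neg_distrib]
      refine sum_equiv (Equiv.mulRight (swap i j)) hmem fun σ _ => ?_
      simp [Perm.sign_swap hij]
    exact CharZero.eq_neg_self_iff.mp hneg

lemma sum_filter_injective_eq_sum_sign_mul {α D : Type*} [Fintype α] [DecidableEq α]
    [∀ σ : Perm α, DecidablePred fun x : α → D => ∀ i, x (σ i) = x i]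
    (X : Finset (α → D)) (f : (α → D) → ℂ) :
    ∑ x ∈ X.filter (fun x => Function.Injective x), f x =
      ∑ σ : Perm α, ((Perm.sign σ : ℤ) : ℂ) * ∑ x ∈ X.filter (fun x => ∀ i, x (σ i) = x i), f x :=
  calc ∑ x ∈ X.filter (fun x => Function.Injective x), f x
      = ∑ x ∈ X, (∑ σ ∈ univ.filter (fun σ : Perm α => ∀ i, x (σ i) = x i),
          ((Perm.sign σ : ℤ) : ℂ)) * f x := by
        simp_rw [sum_sign_fixing_eq_ite_injective, ite_mul, one_mul, zero_mul, sum_ite,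
          sum_const_zero, add_zero]
    _ = ∑ σ : Perm α, ∑ x ∈ X.filter (fun x => ∀ i, x (σ i) = x i),
          ((Perm.sign σ : ℤ) : ℂ) * f x := by
        simp_rw [sum_mul]
        exact sum_comm' fun x σ => by simp only [mem_filter, mem_univ, true_and]; tauto
    _ = _ := by simp_rw [mul_sum]

lemma sum_univ_eq_sum_reps_card_conj_nsmul {G M : Type*} [Monoid G] [Fintype G]
    [DecidableRel (IsConj : G → G → Prop)] [AddCommMonoid M]
    (g : G → M) (hg : ∀ a b, IsConj a b → g a = g b) (R : Finset G)
    (hR : ∀ a : G, ∃! b, b ∈ R ∧ IsConj a b) :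
    ∑ a, g a = ∑ b ∈ R, (univ.filter fun a => IsConj b a).card • g b := by
  choose rep hrep using hR
  rw [← sum_fiberwise_of_maps_to (fun a _ => (hrep a).1.1) g]
  refine sum_congr rfl fun b hb => ?_
  have hfiber : univ.filter (fun a => rep a = b) = univ.filter (fun a => IsConj b a) := by
    ext a
    simp only [mem_filter, mem_univ, true_and]
    exact ⟨fun h => h ▸ (hrep a).1.2.symm, fun h => ((hrep a).2 b ⟨hb, h.symm⟩).symm⟩
  rw [hfiber, ← sum_const]
  exact sum_congr rfl fun a ha => hg a b (mem_filter.mp ha).2.symm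

/-- Symmetric version of the Li–Wan sieving formula: if `X ⊆ D^k` is closed under
permutation of coordinates and `f` is a symmetric function, then the sum of `f` over the
pairwise-distinct-coordinate subset of `X` equals `∑_{[τ] ∈ C_k} sign(τ) C(τ) F_τ`, where
the sum is over a set `R` of representatives of the conjugacy classes of `S_k`, `C(τ)` is
the size of the conjugacy class of `τ`, and `F_τ` is the sum of `f` over the tuples of `X`
constant on each cycle of `τ`. -/
theorem stmt2 {D : Type*} (k : ℕ) (X : Finset (Fin k → D)) (f : (Fin k → D) → ℂ)
    (hX : ∀ (τ : Equiv.Perm (Fin k)) (x : Fin k → D), x ∈ X → x ∘ τ ∈ X)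
    (hf : ∀ (τ : Equiv.Perm (Fin k)) (x : Fin k → D), f (x ∘ τ) = f x)
    (R : Finset (Equiv.Perm (Fin k)))
    (hR : ∀ σ : Equiv.Perm (Fin k), ∃! τ, τ ∈ R ∧ IsConj σ τ) :
    ∑ x ∈ X.filter (fun x => Function.Injective x), f x =
      ∑ τ ∈ R, ((Equiv.Perm.sign τ : ℤ) : ℂ) *
        ((Finset.univ.filter fun σ : Equiv.Perm (Fin k) => IsConj τ σ).card : ℂ) *
        ∑ x ∈ X.filter (fun x => ∀ i, x (τ i) = x i), f x := by
  have hclass : ∀ σ τ : Perm (Fin k), IsConj σ τ →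
      ((Perm.sign σ : ℤ) : ℂ) * ∑ x ∈ X.filter (fun x => ∀ i, x (σ i) = x i), f x =
        ((Perm.sign τ : ℤ) : ℂ) * ∑ x ∈ X.filter (fun x => ∀ i, x (τ i) = x i), f x := by
    intro σ τ h
    obtain ⟨π, rfl⟩ := isConj_iff.mp h
    rw [sum_filter_conj_eq_of_symmetric X f hX hf, isConj_iff_eq.mp (Perm.sign.map_isConj h)]
  rw [sum_filter_injective_eq_sum_sign_mul, sum_univ_eq_sum_reps_card_conj_nsmul _ hclass R hR]
  exact sum_congr rfl fun τ _ => by rw [nsmul_eq_mul]; ring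
end

section
/- For integers d ≥ 2 and real numbers q > s ≥ 0 with d dividing q - s, one has k! · ∑_{i=0}^{⌊k/d⌋} binom((q-s)/d + i - 1, i) · binom(s + k - d·i - 1, k - d·i) ≤ k! · binom(s + k + (q-s)/d - 1, k). -/
/-!
Put `m = (q - s) / d`, a positive integer. Then `binom(m + i - 1, i)` is the multiset coefficient
`((m, i))`, which is nondecreasing in `i` since `m ≥ 1`; so the `i`-th summand is at most
`((m, d i)) ((s, k - d i))`. These are some of the nonnegative terms of the Chu–Vandermonde sum
`∑_j ((m, j)) ((s, k - j)) = ((m + s, k)) = binom(s + k + m - 1, k)`.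
-/

open Finset

/-- The generalized binomial coefficient `binom(x, k) = x (x-1) ⋯ (x-k+1) / k!` for real `x`. -/
noncomputable def rchoose (x : ℝ) (k : ℕ) : ℝ :=
  (∏ i ∈ Finset.range k, (x - i)) / (Nat.factorial k)

theorem rchoose_eq_choose (x : ℝ) (n : ℕ) : rchoose x n = Ring.choose x n := by
  rw [rchoose, ← descPochhammer_eval_eq_prod_range, descPochhammer_eval_eq_ascPochhammer,
    ← Polynomial.ascPochhammer_smeval_eq_eval, ← Ring.factorial_nsmul_multichoose_eq_ascPochhammer,
    nsmul_eq_mul, mul_div_cancel_left₀ _ (by positivity), Ring.choose]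

theorem rchoose_add_sub_one (x : ℝ) (n : ℕ) : rchoose (x + n - 1) n = Ring.multichoose x n := by
  rw [rchoose_eq_choose, Ring.multichoose_eq]

-- Obtained from `Ring.add_choose_eq` at `-r, -s`, since `choose (-r) n = (-1)^n multichoose r n`.
theorem Ring.multichoose_add {R : Type*} [CommRing R] [BinomialRing R] (r s : R) (k : ℕ) :
    multichoose (r + s) k =
      ∑ ij ∈ antidiagonal k, multichoose r ij.1 * multichoose s ij.2 := by
  have h := add_choose_eq (r := -r) (s := -s) k (Commute.all _ _)
  rw [← neg_add, choose_neg'] at h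
  have hterm : ∀ ij ∈ antidiagonal k, choose (-r) ij.1 * choose (-s) ij.2 =
      Int.negOnePow k • (multichoose r ij.1 * multichoose s ij.2) := by
    rintro ⟨i, j⟩ hij
    obtain rfl : i + j = k := HasAntidiagonal.mem_antidiagonal.mp hij
    rw [choose_neg', choose_neg', smul_mul_smul_comm, ← Int.negOnePow_add, Nat.cast_add]
  rw [sum_congr rfl hterm, ← smul_sum] at h
  exact smul_left_cancel _ h

theorem Nat.mul_le_of_mem_range_div_add_one {d i k : ℕ} (hi : i ∈ range (k / d + 1)) :
    d * i ≤ k :=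
  mul_comm i d ▸ Nat.mul_le_of_le_div d i k (Nat.lt_succ_iff.mp (mem_range.mp hi))

section OrderedField

variable {K : Type*} [Field K] [LinearOrder K] [IsStrictOrderedRing K]

theorem ascPochhammer_eval_nonneg {r : K} (hr : 0 ≤ r) (n : ℕ) :
    0 ≤ (ascPochhammer K n).eval r := by
  induction n with
  | zero => simp
  | succ n ih => rw [ascPochhammer_succ_eval]; positivity

theorem Ring.multichoose_nonneg {r : K} (hr : 0 ≤ r) (n : ℕ) : 0 ≤ multichoose r n := by
  have h := ascPochhammer_eval_nonneg hr n
  rw [← Polynomial.ascPochhammer_smeval_eq_eval, ← factorial_nsmul_multichoose_eq_ascPochhammer,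
    nsmul_eq_mul] at h
  exact nonneg_of_mul_nonneg_right h (by positivity)

-- Pascal's rule `((r, n + 1)) = ((r - 1, n + 1)) + ((r, n))`, whose first term is `≥ 0`.
theorem Ring.monotone_multichoose {r : K} (hr : 1 ≤ r) : Monotone (multichoose r) := by
  refine monotone_nat_of_le_succ fun n => ?_
  have h := multichoose_succ_succ (r - 1) n
  rw [sub_add_cancel] at h
  linarith [multichoose_nonneg (sub_nonneg.mpr hr) (n + 1)]

theorem Ring.sum_multichoose_mul_multichoose_le {x y : K} (hx : 1 ≤ x) (hy : 0 ≤ y)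
    {d : ℕ} (hd : 0 < d) (k : ℕ) :
    ∑ i ∈ range (k / d + 1), multichoose x i * multichoose y (k - d * i) ≤
      multichoose (x + y) k := by
  calc ∑ i ∈ range (k / d + 1), multichoose x i * multichoose y (k - d * i)
      ≤ ∑ i ∈ range (k / d + 1), multichoose x (d * i) * multichoose y (k - d * i) :=
        sum_le_sum fun i _ => mul_le_mul_of_nonneg_right
          (monotone_multichoose hx (Nat.le_mul_of_pos_left i hd)) (multichoose_nonneg hy _)
    _ = ∑ j ∈ (range (k / d + 1)).image (d * ·), multichoose x j * multichoose y (k - j) := by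
        rw [sum_image fun a _ b _ hab => Nat.eq_of_mul_eq_mul_left hd hab]
    _ ≤ ∑ j ∈ range (k + 1), multichoose x j * multichoose y (k - j) := by
        refine sum_le_sum_of_subset_of_nonneg ?_ fun j _ _ =>
          mul_nonneg (multichoose_nonneg (zero_le_one.trans hx) _) (multichoose_nonneg hy _)
        rintro _ hj
        obtain ⟨i, hi, rfl⟩ := mem_image.mp hj
        exact mem_range.mpr (Nat.lt_succ_of_le (Nat.mul_le_of_mem_range_div_add_one hi))
    _ = multichoose (x + y) k := by
        rw [multichoose_add,
          Nat.sum_antidiagonal_eq_sum_range_succ (fun i j => multichoose x i * multichoose y j)]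

end OrderedField

theorem stmt5_general (k d : ℕ) (q s : ℝ) (hs : 0 ≤ s) (hq : s < q)
    (hdiv : ∃ m : ℕ, q - s = d * m) :
    (Nat.factorial k : ℝ) * ∑ i ∈ Finset.range (k / d + 1),
        rchoose ((q - s) / d + i - 1) i * rchoose (s + k - d * i - 1) (k - d * i)
      ≤ (Nat.factorial k : ℝ) * rchoose (s + k + (q - s) / d - 1) k := by
  obtain ⟨m, hm⟩ := hdiv
  obtain ⟨hd, hm_pos⟩ : 0 < d ∧ 0 < m :=
    CanonicallyOrderedAdd.mul_pos.mp (by exact_mod_cast hm ▸ sub_pos.mpr hq)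
  have hx : 1 ≤ (q - s) / d := by
    rw [hm, mul_div_cancel_left₀ _ (by positivity)]
    exact_mod_cast hm_pos
  have hterm : ∀ i ∈ range (k / d + 1),
      rchoose ((q - s) / d + i - 1) i * rchoose (s + k - d * i - 1) (k - d * i) =
        Ring.multichoose ((q - s) / d) i * Ring.multichoose s (k - d * i) := fun i hi => by
    rw [rchoose_add_sub_one, ← rchoose_add_sub_one s,
      Nat.cast_sub (Nat.mul_le_of_mem_range_div_add_one hi), Nat.cast_mul, add_sub_assoc']
  rw [sum_congr rfl hterm, show s + k + (q - s) / d - 1 = ((q - s) / d + s) + k - 1 by ring,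
    rchoose_add_sub_one]
  gcongr
  exact Ring.sum_multichoose_mul_multichoose_le hx hs hd k

/-- For integers `d ≥ 2` and reals `q > s ≥ 0` with `d` dividing `q - s`,
`k! ∑_{i=0}^{⌊k/d⌋} binom((q-s)/d + i - 1, i) binom(s + k - d i - 1, k - d i)
  ≤ k! binom(s + k + (q-s)/d - 1, k)`. -/
theorem stmt5 (k d : ℕ) (hd : 2 ≤ d) (q s : ℝ) (hs : 0 ≤ s) (hq : s < q)
    (hdiv : ∃ m : ℕ, q - s = d * m) :
    (Nat.factorial k : ℝ) * ∑ i ∈ Finset.range (k / d + 1),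
        rchoose ((q - s) / d + i - 1) i * rchoose (s + k - d * i - 1) (k - d * i)
      ≤ (Nat.factorial k : ℝ) * rchoose (s + k + (q - s) / d - 1) k :=
  stmt5_general k d q s hs hq hdiv
end

section
/- Let G be a finite abelian group, D ⊆ G a subset of cardinality n, b ∈ G, and 1 ≤ k ≤ n. Let N(k,b,D) be the number of k-element subsets T ⊆ D with ∑_{x∈T} x = b. Then k! · N(k,b,D) = |G|^{-1} · (n)_k + |G|^{-1} · ∑_{χ ≠ χ_0} χ^{-1}(b) · ∑_{x ∈ X̄} ∏_{i=1}^k χ(x_i), where (n)_k = n(n-1)···(n-k+1) and X̄ is the set of k-tuples of pairwise distinct elements of D. -/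
/-!
Each `k`-subset of `D` is the image of exactly `k!` injective `k`-tuples, so `k! N(k,b,D)`
counts injective tuples in `D` with sum `b`. Detecting `∑ xᵢ = b` by character orthogonality,
`|G|⁻¹ ∑_χ χ(-b) χ(∑ xᵢ)`, and splitting off the trivial character, which contributes the
number `(n)_k` of injective tuples, gives the formula.
-/

open Finset

section InjectiveTuples

variable {α : Type*} [DecidableEq α]

theorem card_filter_injective_piFinset (k : ℕ) (D : Finset α) :
    #{x ∈ Fintype.piFinset fun _ : Fin k => D | Function.Injective x} = (#D).descFactorial k := by
  let e : {x // x ∈ {x ∈ Fintype.piFinset fun _ : Fin k => D | Function.Injective x}} ≃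
      (Fin k ↪ D) :=
    { toFun x :=
        ⟨fun i => ⟨x.1 i, Fintype.mem_piFinset.mp (mem_filter.mp x.2).1 i⟩,
          fun _ _ h => (mem_filter.mp x.2).2 (Subtype.ext_iff.mp h)⟩
      invFun f := ⟨fun i => f i, mem_filter.mpr
        ⟨Fintype.mem_piFinset.mpr fun i => (f i).2, fun _ _ h => f.injective (Subtype.ext h)⟩⟩
      left_inv _ := rfl
      right_inv _ := rfl }
  rw [← Fintype.card_coe, Fintype.card_congr e, Fintype.card_embedding_eq, Fintype.card_coe,
    Fintype.card_fin]

theorem filter_image_eq_filter_injective_piFinset {k : ℕ} {D T : Finset α} (hTD : T ⊆ D)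
    (hT : #T = k) :
    {x ∈ {x ∈ Fintype.piFinset fun _ : Fin k => D | Function.Injective x} | image x univ = T} =
      {x ∈ Fintype.piFinset fun _ : Fin k => T | Function.Injective x} := by
  ext x
  simp only [mem_filter, Fintype.mem_piFinset]
  constructor
  · rintro ⟨⟨-, hinj⟩, rfl⟩
    exact ⟨fun i => mem_image_of_mem x (mem_univ i), hinj⟩
  · rintro ⟨hxT, hinj⟩
    refine ⟨⟨fun i => hTD (hxT i), hinj⟩, eq_of_subset_of_card_le ?_ ?_⟩
    · simpa [image_subset_iff] using hxT
    · rw [hT, card_image_of_injective _ hinj, card_univ, Fintype.card_fin]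

theorem card_filter_injective_piFinset_image (k : ℕ) (D : Finset α) (P : Finset α → Prop)
    [DecidablePred P] :
    #{x ∈ {x ∈ Fintype.piFinset fun _ : Fin k => D | Function.Injective x} | P (image x univ)} =
      k.factorial * #{T ∈ D.powersetCard k | P T} := by
  rw [card_eq_sum_card_fiberwise (f := fun x => image x univ)
    (t := {T ∈ D.powersetCard k | P T}), sum_const_nat, mul_comm]
  · intro T hTP
    obtain ⟨hTD, hT⟩ := mem_powersetCard.mp (mem_filter.mp hTP).1
    have hfiber : {x ∈ {x ∈ Fintype.piFinset fun _ : Fin k => D | Function.Injective x} |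
        P (image x univ) ∧ image x univ = T} =
        {x ∈ {x ∈ Fintype.piFinset fun _ : Fin k => D | Function.Injective x} |
          image x univ = T} :=
      filter_congr fun x _ => and_iff_right_of_imp fun h => h ▸ (mem_filter.mp hTP).2
    rw [filter_filter, hfiber, filter_image_eq_filter_injective_piFinset hTD hT,
      card_filter_injective_piFinset, hT, Nat.descFactorial_self]
  · intro x hx
    simp only [coe_filter, mem_filter, Fintype.mem_piFinset, Set.mem_ofPred_eq] at hx
    obtain ⟨⟨hxD, hinj⟩, hP⟩ := hx
    refine mem_filter.mpr ⟨mem_powersetCard.mpr ⟨?_, ?_⟩, hP⟩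
    · simpa [image_subset_iff] using hxD
    · rw [card_image_of_injective _ hinj, card_univ, Fintype.card_fin]

end InjectiveTuples

theorem AddChar.map_sum_eq_prod {ι G M : Type*} [AddCommMonoid G] [CommMonoid M]
    (χ : AddChar G M) (s : Finset ι) (f : ι → G) : χ (∑ i ∈ s, f i) = ∏ i ∈ s, χ (f i) :=
  map_prod χ.toMonoidHom (fun i => Multiplicative.ofAdd (f i)) s

theorem sum_addChar_neg_mul_sum_eq_card_mul {ι G : Type*} [AddCommGroup G] [Fintype G]
    [DecidableEq G] (b : G) (s : Finset ι) (f : ι → G) :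
    ∑ χ : AddChar G ℂ, χ (-b) * ∑ i ∈ s, χ (f i) = Fintype.card G * #{i ∈ s | f i = b} := by
  calc ∑ χ : AddChar G ℂ, χ (-b) * ∑ i ∈ s, χ (f i)
      = ∑ i ∈ s, ∑ χ : AddChar G ℂ, χ (f i - b) := by
        rw [sum_comm]
        simp_rw [mul_sum, sub_eq_add_neg, AddChar.map_add_eq_mul, mul_comm]
    _ = ∑ i ∈ s, if f i = b then (Fintype.card G : ℂ) else 0 := by
        simp_rw [AddChar.sum_apply_eq_ite, sub_eq_zero]
    _ = Fintype.card G * #{i ∈ s | f i = b} := by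
        rw [sum_ite, sum_const_zero, add_zero, sum_const, nsmul_eq_mul, mul_comm]

theorem sum_eq_sum_image_of_injective {ι M : Type*} [Fintype ι] [AddCommMonoid M] [DecidableEq M]
    {x : ι → M} (hx : Function.Injective x) : ∑ i, x i = (image x univ).sum id :=
  (sum_image (f := id) fun _ _ _ _ h => hx h).symm

open scoped Classical in
theorem stmt8_general {G : Type*} [AddCommGroup G] [Fintype G]
    (D : Finset G) (b : G) (k : ℕ) :
    (Nat.factorial k : ℂ) *
        (((D.powersetCard k).filter fun T => T.sum id = b).card : ℂ) =
      (Fintype.card G : ℂ)⁻¹ * (D.card.descFactorial k : ℂ) +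
        (Fintype.card G : ℂ)⁻¹ *
          ∑ χ ∈ Finset.univ.filter (fun χ : AddChar G ℂ => χ ≠ 1),
            χ (-b) *
              ∑ x ∈ (Fintype.piFinset fun _ : Fin k => D).filter
                  (fun x => Function.Injective x),
                ∏ i, χ (x i) := by
  set X := {x ∈ Fintype.piFinset fun _ : Fin k => D | Function.Injective x}
  have hG : (Fintype.card G : ℂ) ≠ 0 := Nat.cast_ne_zero.2 Fintype.card_ne_zero
  have htrivial : (1 : AddChar G ℂ) (-b) * ∑ x ∈ X, ∏ i, (1 : AddChar G ℂ) (x i) =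
      (#D).descFactorial k := by
    simp [X, card_filter_injective_piFinset]
  have hall : ∑ χ : AddChar G ℂ, χ (-b) * ∑ x ∈ X, ∏ i, χ (x i) =
      Fintype.card G * (k.factorial * #{T ∈ D.powersetCard k | T.sum id = b}) := by
    simp_rw [← AddChar.map_sum_eq_prod]
    rw [sum_addChar_neg_mul_sum_eq_card_mul, filter_congr fun x hx => by
      rw [sum_eq_sum_image_of_injective (mem_filter.mp hx).2],
      card_filter_injective_piFinset_image k D (fun T => T.sum id = b)]
    push_cast
    ring
  rw [← mul_add, ← htrivial, filter_ne',
    add_sum_erase _ (fun χ : AddChar G ℂ => χ (-b) * ∑ x ∈ X, ∏ i, χ (x i)) (mem_univ _), hall,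
    ← mul_assoc, inv_mul_cancel₀ hG, one_mul]

open scoped Classical in
/-- Character-sum expression for the subset-sum count: for a finite abelian group `G`,
`D ⊆ G` with `|D| = n`, `b ∈ G` and `1 ≤ k ≤ n`, letting `N(k,b,D)` be the number of
`k`-subsets of `D` summing to `b`,
`k! N(k,b,D) = |G|⁻¹ (n)_k + |G|⁻¹ ∑_{χ ≠ χ₀} χ⁻¹(b) ∑_{x ∈ X̄} ∏_i χ(x_i)`,
where `(n)_k` is the falling factorial and `X̄` is the set of `k`-tuples of pairwise
distinct elements of `D`. -/
theorem stmt8 {G : Type*} [AddCommGroup G] [Fintype G]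
    (D : Finset G) (b : G) (k : ℕ) (hk1 : 1 ≤ k) (hk2 : k ≤ D.card) :
    (Nat.factorial k : ℂ) *
        (((D.powersetCard k).filter fun T => T.sum id = b).card : ℂ) =
      (Fintype.card G : ℂ)⁻¹ * (D.card.descFactorial k : ℂ) +
        (Fintype.card G : ℂ)⁻¹ *
          ∑ χ ∈ Finset.univ.filter (fun χ : AddChar G ℂ => χ ≠ 1),
            χ (-b) *
              ∑ x ∈ (Fintype.piFinset fun _ : Fin k => D).filter
                  (fun x => Function.Injective x),
                ∏ i, χ (x i) :=
  stmt8_general D b k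
end

section
/- Let G be a finite abelian group, D ⊆ G of size n, k ≥ 1, and χ a character of order greater than k. With Φ = max_{ψ ≠ ψ_0} |∑_{a∈D} ψ(a)|, one has |∑_{τ ∈ S_k} sign(τ) · ∏_{cycles c of τ} ∑_{a∈D} χ^{|c|}(a)| ≤ k! · binom(Φ + k − 1, k). -/
open Finset

/-- The full cycle type of a permutation of `Fin k`, including fixed points as
cycles of length `1`. -/
def fullCycleType {k : ℕ} (σ : Equiv.Perm (Fin k)) : Multiset ℕ :=
  σ.cycleType + Multiset.replicate (k - σ.cycleType.sum) 1

/-!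
Since `χ` has order greater than `k`, each `χ ^ c` with `1 ≤ c ≤ k` is a nontrivial character,
so every cycle of `τ` contributes a factor of norm at most `Φ`, and the term of `τ` has norm at
most `Φ ^ (number of cycles of τ)`, fixed points included. Summing these bounds gives the cycle
generating function `∑_{τ ∈ S_k} x ^ (number of cycles of τ)`, which is the rising factorial
`x (x + 1) ⋯ (x + k - 1) = k! binom(x + k - 1, k)`. Inductively, write `τ ∈ S_{k+1}` as
`swap 0 p * τ'` with `τ'` fixing `0`: for `p = 0` this adds the fixed point `0` to the cycles of
`τ'`, for `p ≠ 0` it inserts `0` into the cycle of `p` and the number of cycles does not change.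
-/

open Equiv Equiv.Perm

namespace Equiv.Perm
variable {α : Type*} [DecidableEq α]

theorem disjoint_swap_of_apply_eq_self {f : Perm α} {a b : α} (ha : f a = a) (hb : f b = b) :
    Disjoint (swap a b) f := by
  intro x
  by_cases hxa : x = a
  · exact .inr (hxa ▸ ha)
  by_cases hxb : x = b
  · exact .inr (hxb ▸ hb)
  exact .inl (swap_apply_of_ne_of_ne hxa hxb)

variable [Fintype α]

theorem support_swap_mul_of_apply_eq_self {f : Perm α} {a b : α} (ha : f a = a) (hb : f b ≠ b) :
    (swap a b * f).support = insert a f.support := by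
  ext x
  have := f.injective.eq_iff (a := x) (b := a)
  simp only [mem_support, mem_insert, Perm.mul_apply, swap_apply_def]
  grind

theorem isCycle_swap_mul_cycleOf {f : Perm α} {a b : α} (ha : f a = a) (hb : f b ≠ b) :
    (swap a b * f.cycleOf b).IsCycle := by
  have hbs : b ∈ f.support := mem_support.2 hb
  have hcons : f.toList b = b :: (f.toList b).tail := by
    refine List.eq_cons_of_mem_head? ?_
    rw [List.head?_eq_getElem?, List.getElem?_eq_getElem (length_toList_pos_of_mem_support f b hbs),
      toList_getElem_zero f b hbs]
    rfl
  have hal : a ∉ f.toList b := fun h =>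
    mem_support.1 (support_cycleOf_le f b (mem_support_cycleOf_iff.2 (mem_toList_iff.1 h))) ha
  rw [← formPerm_toList, hcons, ← List.formPerm_cons_cons, ← hcons]
  exact List.isCycle_formPerm (List.nodup_cons.2 ⟨hal, nodup_toList f b⟩)
    (Nat.succ_le_succ (length_toList_pos_of_mem_support f b hbs))

def numCycles (σ : Perm α) : ℕ := Multiset.card σ.partition.parts

theorem numCycles_eq (σ : Perm α) :
    σ.numCycles = Multiset.card σ.cycleType + (Fintype.card α - #σ.support) := by
  simp [numCycles, parts_partition]

theorem IsCycle.numCycles_eq {c : Perm α} (hc : c.IsCycle) :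
    c.numCycles = Fintype.card α - #c.support + 1 := by
  rw [Perm.numCycles_eq, hc.cycleType, Multiset.card_singleton, add_comm]

theorem Disjoint.numCycles_mul_add_card {σ τ : Perm α} (h : Disjoint σ τ) :
    (σ * τ).numCycles + Fintype.card α = σ.numCycles + τ.numCycles := by
  have := card_le_univ (σ * τ).support
  simp only [Perm.numCycles_eq, h.cycleType_mul, h.card_support_mul, Multiset.card_add] at *
  omega

/-- Either the fixed points `a` and `b` merge into the cycle `swap a b`, or `a` joins the cycle
`c` of `b`: then `f = g * c` and `swap a b * f = g * (swap a b * c)` with `g` disjoint from both. -/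
theorem numCycles_swap_mul {f : Perm α} {a b : α} (hab : a ≠ b) (ha : f a = a) :
    (swap a b * f).numCycles + 1 = f.numCycles := by
  have hsupp := card_le_univ (swap a b * f).support
  by_cases hb : f b = b
  · have hmul := (disjoint_swap_of_apply_eq_self ha hb).numCycles_mul_add_card
    rw [(isCycle_swap hab).numCycles_eq, card_support_swap hab] at hmul
    rw [(disjoint_swap_of_apply_eq_self ha hb).card_support_mul, card_support_swap hab] at hsupp
    omega
  · set c := f.cycleOf b
    set g := f * c⁻¹
    have hgc : Disjoint g c := disjoint_mul_inv_of_mem_cycleFactorsFinset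
      (cycleOf_mem_cycleFactorsFinset_iff.2 (mem_support.2 hb))
    have hca : c a = a := notMem_support.1 fun h => mem_support.1 (support_cycleOf_le f b h) ha
    have hcb : c b ≠ b := by simpa [c] using hb
    have hga : g a = a := by
      change f (c⁻¹ a) = a
      rw [inv_eq_iff_eq.2 hca.symm, ha]
    have hgb : g b = b := (hgc b).resolve_right hcb
    have hc : c.IsCycle := isCycle_cycleOf f hb
    have hd : (swap a b * c).IsCycle := isCycle_swap_mul_cycleOf ha hb
    have hsg := disjoint_swap_of_apply_eq_self hga hgb
    have hfd : swap a b * f = g * (swap a b * c) := by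
      rw [← mul_assoc, ← hsg.commute.eq, mul_assoc, inv_mul_cancel_right]
    have hdsupp : (swap a b * c).support = insert a c.support :=
      support_swap_mul_of_apply_eq_self hca hcb
    have hmulf := hgc.numCycles_mul_add_card
    have hmulh := (hsg.symm.mul_right hgc).numCycles_mul_add_card
    rw [inv_mul_cancel_right] at hmulf
    rw [← hfd, hd.numCycles_eq, hdsupp,
      card_insert_of_notMem (fun h => mem_support.1 h hca)] at hmulh
    rw [hc.numCycles_eq] at hmulf
    rw [hfd, (hsg.symm.mul_right hgc).card_support_mul, hdsupp,
      card_insert_of_notMem (fun h => mem_support.1 h hca)] at hsupp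
    omega

theorem decomposeFin_symm_zero {n : ℕ} (e : Perm (Fin n)) :
    decomposeFin.symm (0, e) = e.extendDomain (finSuccAboveEquiv 0) := by
  ext x
  refine Fin.cases ?_ (fun i => ?_) x
  · rw [decomposeFin_symm_apply_zero, extendDomain_apply_not_subtype _ _ (by simp)]
  · have hsucc : i.succ = (finSuccAboveEquiv 0 i : Fin (n + 1)) := rfl
    rw [decomposeFin_symm_apply_succ, hsucc, extendDomain_apply_image]
    simp [finSuccAboveEquiv_apply]

theorem decomposeFin_symm_eq_swap_mul {n : ℕ} (p : Fin (n + 1)) (e : Perm (Fin n)) :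
    decomposeFin.symm (p, e) = swap 0 p * decomposeFin.symm (0, e) := by
  ext x
  refine Fin.cases ?_ (fun i => ?_) x <;> simp

theorem numCycles_decomposeFin_symm {n : ℕ} (p : Fin (n + 1)) (e : Perm (Fin n)) :
    (decomposeFin.symm (p, e)).numCycles = if p = 0 then e.numCycles + 1 else e.numCycles := by
  have hzero : (decomposeFin.symm (0, e)).numCycles = e.numCycles + 1 := by
    have := card_le_univ e.support
    simp only [decomposeFin_symm_zero, Perm.numCycles_eq, cycleType_extendDomain,
      card_support_extend_domain, Fintype.card_fin] at *
    omega
  split_ifs with hp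
  · rw [hp, hzero]
  · have := numCycles_swap_mul (Ne.symm hp) (decomposeFin_symm_apply_zero 0 e)
    rw [decomposeFin_symm_eq_swap_mul]
    omega

theorem sum_pow_numCycles {R : Type*} [CommSemiring R] (n : ℕ) (x : R) :
    ∑ σ : Perm (Fin n), x ^ σ.numCycles = (ascPochhammer R n).eval x := by
  induction n with
  | zero => simp [Perm.numCycles_eq]
  | succ n ih =>
    rw [← decomposeFin.symm.sum_comp, Fintype.sum_prod_type, Fin.sum_univ_succ]
    simp only [numCycles_decomposeFin_symm, Fin.succ_ne_zero, if_true, if_false, pow_succ,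
      ← Finset.sum_mul, ih, sum_const, card_univ, Fintype.card_fin, nsmul_eq_mul,
      ascPochhammer_succ_eval]
    ring

end Equiv.Perm

theorem fullCycleType_eq_parts {k : ℕ} (σ : Perm (Fin k)) :
    fullCycleType σ = σ.partition.parts := by
  rw [fullCycleType, parts_partition, sum_cycleType, Fintype.card_fin]

theorem ascPochhammer_eval_eq_factorial_mul_rchoose (x : ℝ) (k : ℕ) :
    (ascPochhammer ℝ k).eval x = k.factorial * rchoose (x + k - 1) k := by
  rw [rchoose, mul_div_cancel₀ _ (by positivity), ← descPochhammer_eval_eq_prod_range,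
    descPochhammer_eval_eq_ascPochhammer]
  ring_nf

theorem Multiset.norm_prod_map_le_pow_card {ι R : Type*} [SeminormedCommRing R] [NormOneClass R]
    {s : Multiset ι} {f : ι → R} {r : ℝ} (h : ∀ i ∈ s, ‖f i‖ ≤ r) :
    ‖(s.map f).prod‖ ≤ r ^ Multiset.card s := by
  induction s using Multiset.induction with
  | empty => simp
  | cons a s ih =>
    have ha := h a (Multiset.mem_cons_self a s)
    have hs := ih fun i hi => h i (Multiset.mem_cons_of_mem hi)
    rw [Multiset.map_cons, Multiset.prod_cons, Multiset.card_cons, pow_succ']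
    exact (norm_mul_le _ _).trans (mul_le_mul ha hs (norm_nonneg _) ((norm_nonneg _).trans ha))

theorem AddChar.norm_sum_nsmul_le {G R : Type*} [AddCommGroup G] [SeminormedCommRing R]
    (D : Finset G) (χ : AddChar G R) {c : ℕ} (hc₀ : c ≠ 0) (hc : c < orderOf χ) {Φ : ℝ}
    (hΦ : Φ ∈ upperBounds {x | ∃ ψ : AddChar G R, ψ ≠ 1 ∧ x = ‖∑ a ∈ D, ψ a‖}) :
    ‖∑ a ∈ D, χ (c • a)‖ ≤ Φ :=
  hΦ ⟨χ ^ c, pow_ne_one_of_lt_orderOf hc₀ hc, by simp [AddChar.map_nsmul_eq_pow]⟩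

theorem norm_intCast_units {R : Type*} [SeminormedRing R] [NormOneClass R] (u : ℤˣ) :
    ‖((u : ℤ) : R)‖ = 1 := by
  rcases Int.units_eq_one_or u with h | h <;> simp [h]

open scoped Classical in
theorem stmt12_general {G : Type*} [AddCommGroup G]
    (D : Finset G) (k : ℕ) (χ : AddChar G ℂ)
    (hχ : k < orderOf χ)
    (Φ : ℝ)
    (hΦ : IsGreatest
      {x : ℝ | ∃ ψ : AddChar G ℂ, ψ ≠ 1 ∧ x = ‖∑ a ∈ D, ψ a‖} Φ) :
    ‖∑ σ : Equiv.Perm (Fin k), ((Equiv.Perm.sign σ : ℤ) : ℂ) *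
        (Multiset.map (fun c => ∑ a ∈ D, χ (c • a)) (fullCycleType σ)).prod‖ ≤
      (Nat.factorial k : ℝ) * rchoose (Φ + k - 1) k := by
  have hterm (σ : Perm (Fin k)) : ‖((sign σ : ℤ) : ℂ) *
      (Multiset.map (fun c => ∑ a ∈ D, χ (c • a)) (fullCycleType σ)).prod‖ ≤
        Φ ^ σ.numCycles := by
    rw [norm_mul, norm_intCast_units, one_mul, fullCycleType_eq_parts]
    refine Multiset.norm_prod_map_le_pow_card fun c hc => χ.norm_sum_nsmul_le D
      (σ.partition.parts_pos hc).ne' ?_ hΦ.2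
    exact (Nat.Partition.le_of_mem_parts hc).trans_lt (by simpa using hχ)
  calc _ ≤ ∑ σ : Perm (Fin k), Φ ^ σ.numCycles :=
        (norm_sum_le _ _).trans (sum_le_sum fun σ _ => hterm σ)
    _ = _ := by rw [sum_pow_numCycles, ascPochhammer_eval_eq_factorial_mul_rchoose]

open scoped Classical in
/-- For a character `χ` of order greater than `k ≥ 1` of a finite abelian group `G` and
`D ⊆ G` with `|D| = n`, with `Φ` the maximum of `|∑_{a ∈ D} ψ(a)|` over nontrivial
characters `ψ`, the signed sum `∑_{τ ∈ S_k} sign(τ) ∏_{cycles c of τ} ∑_{a ∈ D} χ^{|c|}(a)`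
is bounded in absolute value by `k! binom(Φ + k − 1, k)`. -/
theorem stmt12 {G : Type*} [AddCommGroup G] [Fintype G]
    (D : Finset G) (k : ℕ) (hk : 1 ≤ k) (χ : AddChar G ℂ)
    (hχ : k < orderOf χ)
    (Φ : ℝ)
    (hΦ : IsGreatest
      {x : ℝ | ∃ ψ : AddChar G ℂ, ψ ≠ 1 ∧ x = ‖∑ a ∈ D, ψ a‖} Φ) :
    ‖∑ σ : Equiv.Perm (Fin k), ((Equiv.Perm.sign σ : ℤ) : ℂ) *
        (Multiset.map (fun c => ∑ a ∈ D, χ (c • a)) (fullCycleType σ)).prod‖ ≤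
      (Nat.factorial k : ℝ) * rchoose (Φ + k - 1) k :=
  stmt12_general D k χ hχ Φ hΦ
end

section
/- Let G be an abelian group of order in [q+1−2√q, q+1+2√q] that is a product of at most two cyclic groups, with q ≥ 64, and let D ⊆ G with |D| = n = q + 2. Then for every k with 6 ≤ k < q − 1 and every b ∈ G, the number of k-subsets of D summing to b is positive. -/
open Finset

open scoped Classical

section Aux

variable {G : Type*} [AddCommGroup G] [Fintype G]

private lemma exists_notMem (B : Finset G) (h : B.card < Fintype.card G) : ∃ x, x ∉ B := by
  by_contra hc
  push_neg at hc
  have hB : B = univ := eq_univ_iff_forall.mpr hc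
  rw [hB, card_univ] at h
  exact lt_irrefl _ h

private lemma zmod_tor (n : ℕ) [NeZero n] :
    ((univ : Finset (ZMod n)).filter fun x => x + x = 0).card ≤ 2 := by
  have hsub : ((univ : Finset (ZMod n)).filter fun x => x + x = 0) ⊆
      {(0 : ZMod n), ((n / 2 : ℕ) : ZMod n)} := by
    intro x hx
    have hx' : x + x = 0 := (mem_filter.mp hx).2
    have hval : (x.val + x.val) % n = 0 := by
      have := congrArg ZMod.val hx'
      rwa [ZMod.val_add, ZMod.val_zero] at this
    have hlt := ZMod.val_lt x
    have hdvd : n ∣ x.val + x.val := Nat.dvd_of_mod_eq_zero hval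
    obtain ⟨c, hc⟩ := hdvd
    have hc2 : c < 2 := by
      by_contra hcc
      push_neg at hcc
      have : n * 2 ≤ n * c := Nat.mul_le_mul_left n hcc
      omega
    interval_cases c
    · have hv0 : x.val = 0 := by omega
      have hx0 : x = 0 := by rwa [ZMod.val_eq_zero] at hv0
      simp [hx0]
    · have hv : x.val = n / 2 := by omega
      have hcast : ((x.val : ℕ) : ZMod n) = x := ZMod.natCast_rightInverse x
      rw [hv] at hcast
      simp [← hcast]
  refine le_trans (card_le_card hsub) ?_
  refine le_trans (card_insert_le _ _) ?_
  simp

private lemma tor_le_four (n₁ n₂ : ℕ) (e : G ≃+ ZMod n₁ × ZMod n₂) :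
    ((univ : Finset G).filter fun x => x + x = 0).card ≤ 4 := by
  have hfin : Finite (ZMod n₁ × ZMod n₂) := Finite.of_equiv G e.toEquiv
  have hn₁ : NeZero n₁ := by
    constructor
    rintro rfl
    have hz : Finite (ZMod 0) := Finite.prod_left (ZMod n₂)
    haveI : Finite ℤ := hz
    exact not_finite ℤ
  have hn₂ : NeZero n₂ := by
    constructor
    rintro rfl
    have hz : Finite (ZMod 0) := Finite.prod_right (ZMod n₁)
    haveI : Finite ℤ := hz
    exact not_finite ℤ
  have hmap : ∀ x ∈ (univ : Finset G).filter (fun x => x + x = 0),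
      e x ∈ ((univ : Finset (ZMod n₁ × ZMod n₂)).filter fun y => y + y = 0) := by
    intro x hx
    have hx' : x + x = 0 := (mem_filter.mp hx).2
    refine mem_filter.mpr ⟨mem_univ _, ?_⟩
    rw [← map_add, hx', map_zero]
  have hcard := card_le_card_of_injOn (fun x => e x) hmap
    (fun a _ b _ hab => e.injective hab)
  refine hcard.trans ?_
  have hsub : ((univ : Finset (ZMod n₁ × ZMod n₂)).filter fun y => y + y = 0) ⊆
      ((univ.filter fun x : ZMod n₁ => x + x = 0) ×ˢ (univ.filter fun x : ZMod n₂ => x + x = 0)) := by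
    intro y hy
    have hy' : y + y = 0 := (mem_filter.mp hy).2
    have h1 : y.1 + y.1 = 0 := by
      have := congrArg Prod.fst hy'
      simpa using this
    have h2 : y.2 + y.2 = 0 := by
      have := congrArg Prod.snd hy'
      simpa using this
    simp [mem_product, mem_filter, h1, h2]
  refine (card_le_card hsub).trans ?_
  rw [card_product]
  calc ((univ : Finset (ZMod n₁)).filter fun x => x + x = 0).card *
        ((univ : Finset (ZMod n₂)).filter fun x => x + x = 0).card
      ≤ 2 * 2 := Nat.mul_le_mul (zmod_tor n₁) (zmod_tor n₂)
    _ = 4 := by norm_num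

private lemma solLemma
    (htor : ((univ : Finset G).filter fun x => x + x = 0).card ≤ 4) (c : G) :
    ((univ : Finset G).filter fun x => x + x = c).card ≤ 4 := by
  rcases ((univ : Finset G).filter fun x => x + x = c).eq_empty_or_nonempty with h | h
  · simp [h]
  · obtain ⟨x₀, hx₀⟩ := h
    have hx₀' : x₀ + x₀ = c := (mem_filter.mp hx₀).2
    refine le_trans (card_le_card_of_injOn (fun x => x - x₀) ?_ ?_) htor
    · intro x hx
      have hx' : x + x = c := (mem_filter.mp hx).2
      refine mem_filter.mpr ⟨mem_univ _, ?_⟩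
      have hid : (x - x₀) + (x - x₀) = (x + x) - (x₀ + x₀) := by abel
      rw [hid, hx', hx₀', sub_self]
    · intro a _ b _ hab
      exact sub_left_inj.mp hab

private lemma pairLemma (D : Finset G)
    (htor : ((univ : Finset G).filter fun x => x + x = 0).card ≤ 4)
    (c : G) (V : Finset G)
    (hN : 2 * Dᶜ.card + 2 * V.card + 4 < Fintype.card G) :
    ∃ x y : G, x ∈ D ∧ y ∈ D ∧ x ≠ y ∧ x + y = c ∧ x ∉ V ∧ y ∉ V := by
  set Bad := ((Dᶜ ∪ Dᶜ.image (fun t => c - t)) ∪ ((univ : Finset G).filter fun x => x + x = c))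
      ∪ (V ∪ V.image fun t => c - t) with hBad
  have hcard : Bad.card < Fintype.card G := by
    rw [hBad]
    have b3 := card_union_le ((Dᶜ ∪ Dᶜ.image (fun t => c - t)) ∪ ((univ : Finset G).filter fun x => x + x = c)) (V ∪ V.image fun t => c - t)
    have b1 := card_union_le (Dᶜ ∪ Dᶜ.image (fun t => c - t)) ((univ : Finset G).filter fun x => x + x = c)
    have b2 := card_union_le Dᶜ (Dᶜ.image (fun t => c - t))
    have b4 := card_union_le V (V.image fun t => c - t)
    have i1 := card_image_le (s := Dᶜ) (f := fun t => c - t)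
    have i2 := card_image_le (s := V) (f := fun t => c - t)
    have s1 := solLemma htor c
    omega
  obtain ⟨x, hx⟩ := exists_notMem Bad hcard
  have hxD : x ∈ D := by
    by_contra hh
    exact hx (by simp [hBad, hh])
  have hyD : c - x ∈ D := by
    by_contra hh
    refine hx ?_
    have himg : x ∈ Dᶜ.image (fun t => c - t) :=
      mem_image.mpr ⟨c - x, mem_compl.mpr hh, by rw [sub_sub_cancel]⟩
    simp [hBad, himg]
  have hxsol : x + x ≠ c := by
    intro hcc
    exact hx (by simp [hBad, hcc])
  have hxV : x ∉ V := fun hh => hx (by simp [hBad, hh])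
  have hyV : c - x ∉ V := by
    intro hh
    refine hx ?_
    have himg : x ∈ V.image (fun t => c - t) :=
      mem_image.mpr ⟨c - x, hh, by rw [sub_sub_cancel]⟩
    simp [hBad, himg]
  refine ⟨x, c - x, hxD, hyD, ?_, by abel, hxV, hyV⟩
  intro hxy
  apply hxsol
  nth_rewrite 2 [hxy]
  abel

private lemma zeroPairs (D : Finset G)
    (htor : ((univ : Finset G).filter fun x => x + x = 0).card ≤ 4) :
    ∀ (r : ℕ) (W : Finset G), (∀ w ∈ W, -w ∈ W) →
      2 * Dᶜ.card + W.card + 4 + 2 * r ≤ Fintype.card G →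
      ∃ S : Finset G, S ⊆ D ∧ Disjoint S W ∧ S.card = 2 * r ∧ S.sum id = 0 := by
  intro r
  induction r with
  | zero =>
    intro W _ _
    exact ⟨∅, empty_subset _, disjoint_empty_left _, by simp, by simp⟩
  | succ r ih =>
    intro W hsym hle
    set Bad := ((Dᶜ ∪ Dᶜ.image (fun t => -t)) ∪ W) ∪ ((univ : Finset G).filter fun x => x + x = 0)
      with hBad
    have hcard : Bad.card < Fintype.card G := by
      rw [hBad]
      have b3 := card_union_le ((Dᶜ ∪ Dᶜ.image (fun t => -t)) ∪ W) ((univ : Finset G).filter fun x => x + x = 0)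
      have b1 := card_union_le (Dᶜ ∪ Dᶜ.image (fun t => -t)) W
      have b2 := card_union_le Dᶜ (Dᶜ.image (fun t => -t))
      have i1 := card_image_le (s := Dᶜ) (f := fun t => -t)
      omega
    obtain ⟨w, hw⟩ := exists_notMem Bad hcard
    have hwD : w ∈ D := by
      by_contra hh
      exact hw (by simp [hBad, hh])
    have hwD' : -w ∈ D := by
      by_contra hh
      refine hw ?_
      have himg : w ∈ Dᶜ.image (fun t => -t) :=
        mem_image.mpr ⟨-w, mem_compl.mpr hh, by rw [neg_neg]⟩
      simp [hBad, himg]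
    have hwW : w ∉ W := fun hh => hw (by simp [hBad, hh])
    have hwW' : -w ∉ W := by
      intro hh
      have hmem := hsym _ hh
      rw [neg_neg] at hmem
      exact hw (by simp [hBad, hmem])
    have hwne : w ≠ -w := by
      intro hww
      apply hw
      have hzero : w + w = 0 := by
        nth_rewrite 2 [hww]
        abel
      simp [hBad, hzero]
    have hW'sym : ∀ u ∈ insert w (insert (-w) W), -u ∈ insert w (insert (-w) W) := by
      intro u hu
      rcases mem_insert.mp hu with rfl | hu
      · exact mem_insert_of_mem (mem_insert_self _ _)
      · rcases mem_insert.mp hu with rfl | hu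
        · rw [neg_neg]; exact mem_insert_self _ _
        · exact mem_insert_of_mem (mem_insert_of_mem (hsym _ hu))
    have hW'card : (insert w (insert (-w) W)).card ≤ W.card + 2 := by
      have h1 := card_insert_le w (insert (-w) W)
      have h2 := card_insert_le (-w) W
      omega
    obtain ⟨S', hS'D, hS'disj, hS'card, hS'sum⟩ := ih (insert w (insert (-w) W)) hW'sym (by omega)
    have hwS' : w ∉ S' := disjoint_right.mp hS'disj (mem_insert_self _ _)
    have hwS'' : -w ∉ S' := disjoint_right.mp hS'disj (mem_insert_of_mem (mem_insert_self _ _))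
    have hw1 : w ∉ insert (-w) S' := by
      simp only [mem_insert]
      push_neg
      exact ⟨hwne, hwS'⟩
    refine ⟨insert w (insert (-w) S'), ?_, ?_, ?_, ?_⟩
    · exact insert_subset_iff.mpr ⟨hwD, insert_subset_iff.mpr ⟨hwD', hS'D⟩⟩
    · rw [disjoint_left]
      intro a ha haW
      rcases mem_insert.mp ha with rfl | ha
      · exact hwW haW
      · rcases mem_insert.mp ha with rfl | ha
        · exact hwW' haW
        · exact (disjoint_left.mp hS'disj ha) (mem_insert_of_mem (mem_insert_of_mem haW))
    · rw [card_insert_of_notMem hw1, card_insert_of_notMem hwS'', hS'card]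
      omega
    · rw [sum_insert hw1, sum_insert hwS'', hS'sum]
      simp

private lemma coreLemma (D : Finset G)
    (htor : ((univ : Finset G).filter fun x => x + x = 0).card ≤ 4)
    (hD0 : D.Nonempty) (j : ℕ) (hj : 4 ≤ j) (c : G)
    (hkey : 2 * Dᶜ.card + j + 9 ≤ Fintype.card G) :
    ∃ S : Finset G, S ⊆ D ∧ S.card = j ∧ S.sum id = c := by
  rcases Nat.even_or_odd j with ⟨l, hl⟩ | ⟨l, hl⟩
  · -- j = l + l, l ≥ 2
    obtain ⟨x, y, hxD, hyD, hxy, hsum, -, -⟩ := pairLemma D htor c ∅ (by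
      rw [card_empty]; omega)
    have hWsym : ∀ w ∈ ({x, y, -x, -y} : Finset G), -w ∈ ({x, y, -x, -y} : Finset G) := by
      intro w hw
      simp only [mem_insert, mem_singleton] at hw ⊢
      rcases hw with rfl | rfl | rfl | rfl
      · tauto
      · tauto
      · rw [neg_neg]; tauto
      · rw [neg_neg]; tauto
    obtain ⟨Z, hZD, hZdisj, hZcard, hZsum⟩ := zeroPairs D htor (l - 1) ({x, y, -x, -y}) hWsym (by
      have h1 := card_insert_le x ({y, -x, -y} : Finset G)
      have h2 := card_insert_le y ({-x, -y} : Finset G)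
      have h3 := card_insert_le (-x) ({-y} : Finset G)
      have h4 : ({-y} : Finset G).card = 1 := card_singleton _
      omega)
    have hxZ : x ∉ Z := disjoint_right.mp hZdisj (by simp)
    have hyZ : y ∉ Z := disjoint_right.mp hZdisj (by simp)
    have hx1 : x ∉ insert y Z := by
      simp only [mem_insert]
      push_neg
      exact ⟨hxy, hxZ⟩
    refine ⟨insert x (insert y Z), ?_, ?_, ?_⟩
    · exact insert_subset_iff.mpr ⟨hxD, insert_subset_iff.mpr ⟨hyD, hZD⟩⟩
    · rw [card_insert_of_notMem hx1, card_insert_of_notMem hyZ, hZcard]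
      omega
    · rw [sum_insert hx1, sum_insert hyZ, hZsum]
      simpa using hsum
  · -- j = 2l + 1, l ≥ 2
    have hl2 : 2 ≤ l := by omega
    obtain ⟨z, hzD⟩ := hD0
    obtain ⟨x, y, hxD, hyD, hxy, hsum, hxz, hyz⟩ := pairLemma D htor (c - z) {z} (by
      rw [card_singleton]; omega)
    have hxz' : x ≠ z := by simpa using hxz
    have hyz' : y ≠ z := by simpa using hyz
    have hWsym : ∀ w ∈ ({x, y, z, -x, -y, -z} : Finset G),
        -w ∈ ({x, y, z, -x, -y, -z} : Finset G) := by
      intro w hw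
      simp only [mem_insert, mem_singleton] at hw ⊢
      rcases hw with rfl | rfl | rfl | rfl | rfl | rfl
      · tauto
      · tauto
      · tauto
      · rw [neg_neg]; tauto
      · rw [neg_neg]; tauto
      · rw [neg_neg]; tauto
    obtain ⟨Z, hZD, hZdisj, hZcard, hZsum⟩ := zeroPairs D htor (l - 1)
        ({x, y, z, -x, -y, -z}) hWsym (by
      have h1 := card_insert_le x ({y, z, -x, -y, -z} : Finset G)
      have h2 := card_insert_le y ({z, -x, -y, -z} : Finset G)
      have h3 := card_insert_le z ({-x, -y, -z} : Finset G)
      have h4 := card_insert_le (-x) ({-y, -z} : Finset G)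
      have h5 := card_insert_le (-y) ({-z} : Finset G)
      have h6 : ({-z} : Finset G).card = 1 := card_singleton _
      omega)
    have hxZ : x ∉ Z := disjoint_right.mp hZdisj (by simp)
    have hyZ : y ∉ Z := disjoint_right.mp hZdisj (by simp)
    have hzZ : z ∉ Z := disjoint_right.mp hZdisj (by simp)
    have hx1 : x ∉ insert y Z := by
      simp only [mem_insert]
      push_neg
      exact ⟨hxy, hxZ⟩
    have hz1 : z ∉ insert x (insert y Z) := by
      simp only [mem_insert]
      push_neg
      exact ⟨fun hh => hxz' hh.symm, fun hh => hyz' hh.symm, hzZ⟩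
    refine ⟨insert z (insert x (insert y Z)), ?_, ?_, ?_⟩
    · exact insert_subset_iff.mpr ⟨hzD,
        insert_subset_iff.mpr ⟨hxD, insert_subset_iff.mpr ⟨hyD, hZD⟩⟩⟩
    · rw [card_insert_of_notMem hz1, card_insert_of_notMem hx1,
        card_insert_of_notMem hyZ, hZcard]
      omega
    · rw [sum_insert hz1, sum_insert hx1, sum_insert hyZ, hZsum]
      simp only [id_eq, add_zero]
      rw [hsum]
      abel

end Aux

open scoped Classical in
/-- Let `G` be a finite abelian group of rank at most two whose order lies in
`[q+1−2√q, q+1+2√q]` with `q ≥ 64`, and let `D ⊆ G` with `|D| = q + 2`.  Then for every `k`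
with `6 ≤ k < q − 1` and every `b ∈ G`, the number of `k`-subsets of `D` summing to `b` is
positive. -/
theorem stmt17 {G : Type*} [AddCommGroup G] [Fintype G]
    (q : ℕ) (hq : 64 ≤ q)
    (hcard : |(Fintype.card G : ℝ) - ((q : ℝ) + 1)| ≤ 2 * Real.sqrt q)
    (n₁ n₂ : ℕ) (h : Nonempty (G ≃+ ZMod n₁ × ZMod n₂))
    (D : Finset G) (hD : D.card = q + 2) :
    ∀ k : ℕ, 6 ≤ k → k < q - 1 →
      ∀ b : G, 0 < ((D.powersetCard k).filter fun T => T.sum id = b).card := by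
  intro k hk6 hkq b
  obtain ⟨e⟩ := h
  have htor := tor_le_four n₁ n₂ e
  have hND : q + 2 ≤ Fintype.card G := hD ▸ D.card_le_univ
  have hcompl : Dᶜ.card + (q + 2) = Fintype.card G := by
    have hc := card_compl D
    rw [hD] at hc
    omega
  have habs := abs_le.mp hcard
  have hsqrt8 : (8 : ℝ) ≤ Real.sqrt q := by
    have h64 : Real.sqrt 64 ≤ Real.sqrt q := Real.sqrt_le_sqrt (by exact_mod_cast hq)
    rwa [show (64 : ℝ) = 8 ^ 2 by norm_num, Real.sqrt_sq (by norm_num : (0:ℝ) ≤ 8)] at h64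
  have hss : Real.sqrt q * Real.sqrt q = q := Real.mul_self_sqrt (by positivity)
  have hNnat : 2 * Fintype.card G + q + 14 ≤ 4 * q := by
    have hr : (2 * (Fintype.card G : ℝ) + q + 14) ≤ 4 * q := by
      nlinarith [habs.2, hsqrt8, hss, Real.sqrt_nonneg (q : ℝ)]
    exact_mod_cast hr
  have hD0 : D.Nonempty := card_pos.mp (by rw [hD]; omega)
  by_cases hcase : 2 * k ≤ q + 2
  · obtain ⟨S, hSD, hScard, hSsum⟩ := coreLemma D htor hD0 k (by omega) b (by omega)
    exact card_pos.mpr ⟨S, mem_filter.mpr ⟨mem_powersetCard.mpr ⟨hSD, hScard⟩, hSsum⟩⟩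
  · obtain ⟨S, hSD, hScard, hSsum⟩ := coreLemma D htor hD0 (q + 2 - k) (by omega)
      (D.sum id - b) (by omega)
    refine card_pos.mpr ⟨D \ S, mem_filter.mpr ⟨mem_powersetCard.mpr ⟨sdiff_subset, ?_⟩, ?_⟩⟩
    · rw [card_sdiff_of_subset hSD, hD]
      omega
    · have h2 := sum_sdiff (f := id) hSD
      rw [hSsum] at h2
      have h3 : (D \ S).sum id = D.sum id - (D.sum id - b) := eq_sub_of_add_eq h2
      rwa [sub_sub_cancel] at h3
end
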